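/- arXiv:2204.13726 — 7 statements merged into one kernel-verified Lean document; each statement's English description precedes it below -/
import Mathlib

section
/- Fix v̄ > 0 and define u(v, r) = v·(1 + log(r/v̄)) − (r − v̄/e) for r ∈ [v̄/e, v̄]. Then: (i) if v̄/e ≤ v ≤ v̄, then u(v, r) ≤ u(v, v) for all r ∈ [v̄/e, v̄], and u(v, v) = v·log(v/v̄) + v̄/e ≥ 0; (ii) if 0 ≤ v < v̄/e, then u(v, r) ≤ 0 for all r ∈ [v̄/e, v̄]. -/
lemma log_le_div_e {x : ℝ} (hx : 0 < x) : Real.log x ≤ x / Real.exp 1 := by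
  have h := Real.log_le_sub_one_of_pos (div_pos hx (Real.exp_pos 1))
  rw [Real.log_div hx.ne' (Real.exp_ne_zero 1), Real.log_exp] at h
  linarith

lemma key_ineq {v r : ℝ} (hv : 0 < v) (hr : 0 < r) :
    v * Real.log (r / v) ≤ r - v := by
  have h := Real.log_le_sub_one_of_pos (div_pos hr hv)
  have h2 : v * (r / v) = r := mul_div_cancel₀ r hv.ne'
  nlinarith [mul_le_mul_of_nonneg_left h hv.le]

/-- Fix `v̄ > 0` and define `u(v, r) = v·(1 + log(r/v̄)) − (r − v̄/e)`
for `r ∈ [v̄/e, v̄]`. Then: (i) if `v̄/e ≤ v ≤ v̄`, then `u(v, r) ≤ u(v, v)` for all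
`r ∈ [v̄/e, v̄]`, and `u(v, v) = v·log(v/v̄) + v̄/e ≥ 0`; (ii) if `0 ≤ v < v̄/e`, then
`u(v, r) ≤ 0` for all `r ∈ [v̄/e, v̄]`. -/
theorem stmt_3 (vbar : ℝ) (hvbar : 0 < vbar) (u : ℝ → ℝ → ℝ)
    (hu : ∀ v r, u v r = v * (1 + Real.log (r / vbar)) - (r - vbar / Real.exp 1)) :
    (∀ v, vbar / Real.exp 1 ≤ v → v ≤ vbar →
      (∀ r ∈ Set.Icc (vbar / Real.exp 1) vbar, u v r ≤ u v v) ∧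
        u v v = v * Real.log (v / vbar) + vbar / Real.exp 1 ∧ 0 ≤ u v v) ∧
    (∀ v, 0 ≤ v → v < vbar / Real.exp 1 →
      ∀ r ∈ Set.Icc (vbar / Real.exp 1) vbar, u v r ≤ 0) := by
  have hw : 0 < vbar / Real.exp 1 := div_pos hvbar (Real.exp_pos 1)
  have part1 : ∀ v, vbar / Real.exp 1 ≤ v → v ≤ vbar →
      (∀ r ∈ Set.Icc (vbar / Real.exp 1) vbar, u v r ≤ u v v) ∧
        u v v = v * Real.log (v / vbar) + vbar / Real.exp 1 ∧ 0 ≤ u v v := by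
    intro v hv1 hv2
    have hv : 0 < v := lt_of_lt_of_le hw hv1
    refine ⟨?_, ?_, ?_⟩
    · intro r ⟨hr1, hr2⟩
      have hr : 0 < r := lt_of_lt_of_le hw hr1
      rw [hu, hu]
      have h1 : Real.log (r / vbar) - Real.log (v / vbar) = Real.log (r / v) := by
        rw [Real.log_div hr.ne' hvbar.ne', Real.log_div hv.ne' hvbar.ne',
          Real.log_div hr.ne' hv.ne']
        ring
      have h2 : v * Real.log (r / vbar) - v * Real.log (v / vbar)
          = v * Real.log (r / v) := by rw [← h1]; ring
      have h3 := key_ineq hv hr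
      nlinarith
    · rw [hu]; ring
    · rw [hu]
      have h1 : Real.log (vbar / v) ≤ (vbar / v) / Real.exp 1 :=
        log_le_div_e (div_pos hvbar hv)
      have h2 : v * (vbar / v) = vbar := mul_div_cancel₀ vbar hv.ne'
      have h3 : Real.log (v / vbar) = - Real.log (vbar / v) := by
        rw [Real.log_div hv.ne' hvbar.ne', Real.log_div hvbar.ne' hv.ne']; ring
      have h4 : v * Real.log (vbar / v) ≤ vbar / Real.exp 1 := by
        calc v * Real.log (vbar / v) ≤ v * ((vbar / v) / Real.exp 1) := by
              exact mul_le_mul_of_nonneg_left h1 hv.le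
          _ = vbar / Real.exp 1 := by field_simp
      nlinarith
  refine ⟨part1, ?_⟩
  intro v hv0 hvw r hr
  obtain ⟨hr1, hr2⟩ := hr
  have hwle : vbar / Real.exp 1 ≤ vbar := by
    rw [div_le_iff₀ (Real.exp_pos 1)]
    nlinarith [Real.exp_one_gt_d9, hvbar.le]
  obtain ⟨hmax, heq, _⟩ := part1 (vbar / Real.exp 1) le_rfl hwle
  have huw : u (vbar / Real.exp 1) (vbar / Real.exp 1) = 0 := by
    rw [heq]
    have : Real.log (vbar / Real.exp 1 / vbar) = -1 := by
      rw [div_right_comm, div_self hvbar.ne', one_div, Real.log_inv, Real.log_exp]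
    rw [this]; ring
  have hstep : u v r ≤ u (vbar / Real.exp 1) r := by
    rw [hu, hu]
    have hc : (0:ℝ) ≤ 1 + Real.log (r / vbar) := by
      have hmono : Real.log (vbar / Real.exp 1 / vbar) ≤ Real.log (r / vbar) :=
        Real.log_le_log (div_pos hw hvbar) (by gcongr)
      have : Real.log (vbar / Real.exp 1 / vbar) = -1 := by
        rw [div_right_comm, div_self hvbar.ne', one_div, Real.log_inv, Real.log_exp]
      linarith
    nlinarith [mul_le_mul_of_nonneg_right hvw.le hc]
  have := hmax r ⟨hr1, hr2⟩
  linarith [hstep, this, huw.le]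
end

section
/- Let I be a nonempty finite set of bidders with value bounds v̄_i > 0 and values v_i ∈ [0, v̄_i] for i ∈ I. Suppose bidder i satisfies v_i > v_k for all k ≠ i, and let p = max_{k ≠ i} v_k (with p = 0 if I = {i}). Define the winner's payment t by: t = v_i − v̄_i/e if p < v̄_i/e ≤ v_i; t = v_i + p·log(p/v̄_i) if v̄_i/e ≤ p < v_i; t = 0 if v_i < v̄_i/e. Then max_{k∈I} v_k − t ≤ max_{k∈I} v̄_k / e. -/
/-- per-good, truth-telling, no-ties case of Proposition 1:
the ex-post regret `max_k v_k − t` of the second-price auction with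
bidder-specific random reserves is at most `max_k v̄_k / e`. -/
theorem stmt_4 {ι : Type*} [Fintype ι] [Nonempty ι] [DecidableEq ι]
    (vbar : ι → ℝ) (hvbar : ∀ i, 0 < vbar i)
    (v : ι → ℝ) (hv : ∀ i, 0 ≤ v i ∧ v i ≤ vbar i)
    (i : ι) (hi : ∀ k, k ≠ i → v k < v i)
    (p : ℝ) (hp : p = (Finset.univ.erase i).fold max 0 v)
    (t : ℝ)
    (ht : t = if v i < vbar i / Real.exp 1 then 0
      else if p < vbar i / Real.exp 1 then v i - vbar i / Real.exp 1
      else v i + p * Real.log (p / vbar i)) :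
    Finset.univ.sup' Finset.univ_nonempty v - t ≤
      Finset.univ.sup' Finset.univ_nonempty vbar / Real.exp 1 := by
  have he : (0:ℝ) < Real.exp 1 := Real.exp_pos 1
  have hsupv : Finset.univ.sup' Finset.univ_nonempty v = v i := by
    apply le_antisymm
    · apply Finset.sup'_le
      intro k _
      by_cases hk : k = i
      · simp [hk]
      · exact (hi k hk).le
    · exact Finset.le_sup' v (Finset.mem_univ i)
  have hvbari : vbar i ≤ Finset.univ.sup' Finset.univ_nonempty vbar :=
    Finset.le_sup' vbar (Finset.mem_univ i)
  have hbound : vbar i / Real.exp 1 ≤ Finset.univ.sup' Finset.univ_nonempty vbar / Real.exp 1 := by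
    gcongr
  rw [hsupv, ht]
  split_ifs with h1 h2
  · linarith [(hv i).1]
  · linarith
  · push_neg at h1 h2
    have hp0 : 0 < p := lt_of_lt_of_le (div_pos (hvbar i) he) h2
    have hy : 0 < vbar i / p := div_pos (hvbar i) hp0
    have hlog : Real.log (vbar i / p) ≤ (vbar i / p) / Real.exp 1 := by
      have h3 : (0:ℝ) < vbar i / p / Real.exp 1 := by positivity
      have := Real.log_le_sub_one_of_pos h3
      rw [Real.log_div hy.ne' he.ne', Real.log_exp] at this
      linarith
    have hneg : Real.log (p / vbar i) = - Real.log (vbar i / p) := by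
      rw [← Real.log_inv, inv_div]
    rw [hneg]
    have hmul : p * Real.log (vbar i / p) ≤ p * ((vbar i / p) / Real.exp 1) :=
      mul_le_mul_of_nonneg_left hlog hp0.le
    have hcalc : p * ((vbar i / p) / Real.exp 1) = vbar i / Real.exp 1 := by
      field_simp
    linarith
end

section
/- Fix v̄ > 0 and let μ_{v̄} be the equal-revenue distribution. Then for every p with v̄/e ≤ p ≤ v̄, μ_{v̄}({x : x ≥ p}) = v̄/(e·p), so p·μ_{v̄}({x : x ≥ p}) = v̄/e; and for every p ≥ 0, p·μ_{v̄}({x : x ≥ p}) ≤ v̄/e. -/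
/-- The equal-revenue quantile function: `φ_{v̄}(z) = v̄/(e(1−z))` for
`z < 1 − 1/e` and `φ_{v̄}(z) = v̄` for `z ≥ 1 − 1/e`. -/
noncomputable def erQuantile (vb z : ℝ) : ℝ :=
  if z < 1 - 1 / Real.exp 1 then vb / (Real.exp 1 * (1 - z)) else vb

/-- for the equal-revenue distribution `μ_{v̄}` (pushforward of the
uniform probability measure on `[0,1]` under `φ_{v̄}`): for every `p` with
`v̄/e ≤ p ≤ v̄`, `μ_{v̄}({x : x ≥ p}) = v̄/(e·p)`, so `p·μ_{v̄}({x : x ≥ p}) = v̄/e`;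
and for every `p ≥ 0`, `p·μ_{v̄}({x : x ≥ p}) ≤ v̄/e`. -/
theorem stmt_7 (vb : ℝ) (hvb : 0 < vb) (mu : MeasureTheory.Measure ℝ)
    (hmu : mu = MeasureTheory.Measure.map (erQuantile vb)
      (MeasureTheory.volume.restrict (Set.Icc (0:ℝ) 1))) :
    (∀ p : ℝ, vb / Real.exp 1 ≤ p → p ≤ vb →
      mu {x | p ≤ x} = ENNReal.ofReal (vb / (Real.exp 1 * p)) ∧
        p * (mu {x | p ≤ x}).toReal = vb / Real.exp 1) ∧
    ∀ p : ℝ, 0 ≤ p → p * (mu {x | p ≤ x}).toReal ≤ vb / Real.exp 1 := by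
  have he : (0:ℝ) < Real.exp 1 := Real.exp_pos 1
  have he1 : (1:ℝ) < Real.exp 1 := by nlinarith [Real.add_one_le_exp (1:ℝ)]
  have hm : Measurable (erQuantile vb) := by
    unfold erQuantile
    exact Measurable.ite (measurableSet_lt measurable_id measurable_const)
      (measurable_const.div ((measurable_const.mul (measurable_const.sub measurable_id))))
      measurable_const
  have happ : ∀ p : ℝ, mu {x | p ≤ x}
      = MeasureTheory.volume ((erQuantile vb ⁻¹' Set.Ici p) ∩ Set.Icc 0 1) := by
    intro p
    have h1 : ({x : ℝ | p ≤ x}) = Set.Ici p := rfl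
    rw [hmu, h1, MeasureTheory.Measure.map_apply hm measurableSet_Ici,
      MeasureTheory.Measure.restrict_apply (hm measurableSet_Ici)]
  -- main case set computation
  have key : ∀ p : ℝ, vb / Real.exp 1 ≤ p → p ≤ vb →
      (erQuantile vb ⁻¹' Set.Ici p) ∩ Set.Icc 0 1
        = Set.Icc (1 - vb / (Real.exp 1 * p)) 1 := by
    intro p hp1 hp2
    have hp0 : 0 < p := lt_of_lt_of_le (div_pos hvb he) hp1
    have hep : 0 < Real.exp 1 * p := mul_pos he hp0
    have hvbp : vb ≤ Real.exp 1 * p := by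
      have := (div_le_iff₀ he).mp hp1
      nlinarith
    have ha1 : vb / (Real.exp 1 * p) ≤ 1 := by
      rw [div_le_one hep]
      exact hvbp
    have ha2 : (1:ℝ)/Real.exp 1 ≤ vb / (Real.exp 1 * p) := by
      rw [div_le_div_iff₀ he hep]
      nlinarith
    ext z
    simp only [Set.mem_inter_iff, Set.mem_preimage, Set.mem_Ici, Set.mem_Icc, erQuantile]
    constructor
    · rintro ⟨h1, h2, h3⟩
      refine ⟨?_, h3⟩
      by_cases hz : z < 1 - 1 / Real.exp 1
      · rw [if_pos hz] at h1
        have h1z : 1 / Real.exp 1 < 1 - z := by linarith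
        have hpos : 0 < Real.exp 1 * (1 - z) := by
          have : 0 < 1 - z := lt_trans (by positivity) h1z
          positivity
        rw [le_div_iff₀ hpos] at h1
        rw [sub_le_iff_le_add, ← sub_le_iff_le_add']
        rw [le_div_iff₀ hep]
        nlinarith
      · push_neg at hz
        have : 1 - vb / (Real.exp 1 * p) ≤ 1 - 1/Real.exp 1 := by linarith
        linarith
    · rintro ⟨h1, h3⟩
      have h0 : 0 ≤ z := by
        have : 0 ≤ 1 - vb / (Real.exp 1 * p) := by linarith
        linarith
      refine ⟨?_, h0, h3⟩
      by_cases hz : z < 1 - 1 / Real.exp 1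
      · rw [if_pos hz]
        have h1z : 1 / Real.exp 1 < 1 - z := by linarith
        have hpos : 0 < Real.exp 1 * (1 - z) := by
          have : 0 < 1 - z := lt_trans (by positivity) h1z
          positivity
        rw [le_div_iff₀ hpos]
        have h5 : 1 - z ≤ vb / (Real.exp 1 * p) := by linarith
        have h4 := (le_div_iff₀ hep).mp h5
        nlinarith
      · rw [if_neg hz]; exact hp2
  have main : ∀ p : ℝ, vb / Real.exp 1 ≤ p → p ≤ vb →
      mu {x | p ≤ x} = ENNReal.ofReal (vb / (Real.exp 1 * p)) ∧
        p * (mu {x | p ≤ x}).toReal = vb / Real.exp 1 := by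
    intro p hp1 hp2
    have hp0 : 0 < p := lt_of_lt_of_le (div_pos hvb he) hp1
    have hep : 0 < Real.exp 1 * p := mul_pos he hp0
    have hmu1 : mu {x | p ≤ x} = ENNReal.ofReal (vb / (Real.exp 1 * p)) := by
      rw [happ p, key p hp1 hp2, Real.volume_Icc]
      congr 1
      ring
    refine ⟨hmu1, ?_⟩
    rw [hmu1, ENNReal.toReal_ofReal (by positivity)]
    field_simp
  refine ⟨main, ?_⟩
  intro p hp
  rcases le_or_gt p (vb / Real.exp 1) with hle | hgt
  · -- small price: measure ≤ 1
    have hle1 : mu {x | p ≤ x} ≤ 1 := by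
      rw [happ p]
      calc MeasureTheory.volume ((erQuantile vb ⁻¹' Set.Ici p) ∩ Set.Icc 0 1)
          ≤ MeasureTheory.volume (Set.Icc (0:ℝ) 1) :=
            MeasureTheory.measure_mono Set.inter_subset_right
        _ = 1 := by rw [Real.volume_Icc]; norm_num
    have : (mu {x | p ≤ x}).toReal ≤ 1 := by
      have := ENNReal.toReal_mono (by norm_num) hle1
      simpa using this
    calc p * (mu {x | p ≤ x}).toReal ≤ p * 1 := by
          exact mul_le_mul_of_nonneg_left this hp
      _ = p := mul_one p
      _ ≤ vb / Real.exp 1 := hle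
  · rcases le_or_gt p vb with hpv | hpv
    · exact le_of_eq ((main p hgt.le hpv).2)
    · -- p > vb : empty set
      have hempty : (erQuantile vb ⁻¹' Set.Ici p) ∩ Set.Icc 0 1 = ∅ := by
        apply Set.eq_empty_iff_forall_notMem.mpr
        rintro z ⟨h1, h2, h3⟩
        simp only [Set.mem_preimage, Set.mem_Ici, erQuantile] at h1
        by_cases hz : z < 1 - 1 / Real.exp 1
        · rw [if_pos hz] at h1
          have h1z : 1 / Real.exp 1 < 1 - z := by linarith
          have hpos : 0 < Real.exp 1 * (1 - z) := by
            have : 0 < 1 - z := lt_trans (by positivity) h1z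
            positivity
          rw [le_div_iff₀ hpos] at h1
          have h6 : (1:ℝ) < (1 - z) * Real.exp 1 := (div_lt_iff₀ he).mp h1z
          nlinarith [mul_le_mul_of_nonneg_left h6.le hp]
        · rw [if_neg hz] at h1; linarith
      rw [happ p, hempty]
      simp
      positivity
end

section
/- Fix v̄ > 0. For every probability measure G on [0, ∞), ∫_0^1 ∫_{[0,∞)} (φ_{v̄}(z) − p·𝟙{φ_{v̄}(z) ≥ p}) dG(p) dz ≥ v̄/e. -/
/-! The quantile `φ_{v̄}` integrates to `v̄/e` on each of `[0, 1 − 1/e]` and `[1 − 1/e, 1]`, so the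
expected value is `2v̄/e`. A price `p > 0` sells only for `z ≥ 1 − v̄/(e p)`, so it earns at most
`p · v̄/(e p) = v̄/e`. By Fubini the expected regret of `G` is the expected value minus the
`G`-average of these revenues, hence at least `2v̄/e − v̄/e`. -/

open MeasureTheory Set Real

noncomputable def postedPricePayment (x p : ℝ) : ℝ := if p ≤ x then p else 0

lemma postedPricePayment_nonneg (x : ℝ) {p : ℝ} (hp : 0 ≤ p) : 0 ≤ postedPricePayment x p := by
  unfold postedPricePayment; split_ifs <;> simp [hp]

lemma postedPricePayment_le {x : ℝ} (hx : 0 ≤ x) (p : ℝ) : postedPricePayment x p ≤ x := by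
  unfold postedPricePayment; split_ifs with h
  exacts [h, hx]

lemma measurable_postedPricePayment :
    Measurable fun q : ℝ × ℝ => postedPricePayment q.1 q.2 :=
  Measurable.ite (measurableSet_le measurable_snd measurable_fst) measurable_snd measurable_const

lemma integrable_postedPricePayment {G : Measure ℝ} [IsFiniteMeasure G] (hG : ∀ᵐ p ∂G, 0 ≤ p)
    {x : ℝ} (hx : 0 ≤ x) : Integrable (postedPricePayment x) G := by
  refine (integrable_const x).mono'
    (measurable_postedPricePayment.comp measurable_prodMk_left).aestronglyMeasurable ?_
  filter_upwards [hG] with p hp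
  rw [norm_of_nonneg (postedPricePayment_nonneg x hp)]
  exact postedPricePayment_le hx p

lemma sub_le_integral_integral_sub_postedPricePayment {Z : Type*} [MeasurableSpace Z]
    {μ : Measure Z} [SFinite μ] {G : Measure ℝ} [IsProbabilityMeasure G] (hG : ∀ᵐ p ∂G, 0 ≤ p)
    {v : Z → ℝ} (hv : Measurable v) (hv_int : Integrable v μ) (hv0 : ∀ z, 0 ≤ v z) {R : ℝ}
    (hR : ∀ p, 0 ≤ p → ∫ z, postedPricePayment (v z) p ∂μ ≤ R) :
    ∫ z, v z ∂μ - R ≤ ∫ z, ∫ p, (v z - postedPricePayment (v z) p) ∂G ∂μ := by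
  have hpay : Integrable (fun q : Z × ℝ => postedPricePayment (v q.1) q.2) (μ.prod G) := by
    refine (hv_int.comp_fst G).mono' (measurable_postedPricePayment.comp
      ((hv.comp measurable_fst).prodMk measurable_snd)).aestronglyMeasurable ?_
    filter_upwards [Measure.quasiMeasurePreserving_snd.ae hG] with q hq
    rw [norm_of_nonneg (postedPricePayment_nonneg _ hq)]
    exact postedPricePayment_le (hv0 _) _
  have hrevenue : ∫ p, ∫ z, postedPricePayment (v z) p ∂μ ∂G ≤ R := by
    calc ∫ p, ∫ z, postedPricePayment (v z) p ∂μ ∂G ≤ ∫ _, R ∂G :=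
          integral_mono_ae hpay.integral_prod_right (integrable_const R) (hG.mono hR)
      _ = R := by simp
  calc ∫ z, v z ∂μ - R
      ≤ ∫ z, v z ∂μ - ∫ p, ∫ z, postedPricePayment (v z) p ∂μ ∂G := by linarith
    _ = ∫ z, (v z - ∫ p, postedPricePayment (v z) p ∂G) ∂μ := by
      rw [integral_sub hv_int hpay.integral_prod_left,
        integral_integral_swap (f := fun z p => postedPricePayment (v z) p) hpay]
    _ = ∫ z, ∫ p, (v z - postedPricePayment (v z) p) ∂G ∂μ := by
      congr 1 with z
      rw [integral_sub (integrable_const _) (integrable_postedPricePayment hG (hv0 z)),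
        integral_const, probReal_univ, one_smul]

lemma one_sub_one_div_exp_one_mem_Ioo : 1 - 1 / exp 1 ∈ Ioo (0:ℝ) 1 := by
  have h : 1 / exp 1 < 1 := by
    rw [div_lt_one (exp_pos 1)]; exact one_lt_exp_iff.mpr one_pos
  constructor <;> linarith [exp_pos 1, one_div_pos.mpr (exp_pos 1)]

lemma erQuantile_of_lt {vb z : ℝ} (hz : z < 1 - 1 / exp 1) :
    erQuantile vb z = vb / (exp 1 * (1 - z)) := if_pos hz

lemma erQuantile_of_le {vb z : ℝ} (hz : 1 - 1 / exp 1 ≤ z) : erQuantile vb z = vb :=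
  if_neg hz.not_gt

lemma measurable_erQuantile (vb : ℝ) : Measurable (erQuantile vb) :=
  Measurable.ite (measurableSet_lt measurable_id measurable_const)
    (measurable_const.div (measurable_const.mul (measurable_const.sub measurable_id)))
    measurable_const

lemma erQuantile_nonneg {vb : ℝ} (hvb : 0 ≤ vb) (z : ℝ) : 0 ≤ erQuantile vb z := by
  rcases lt_or_ge z (1 - 1 / exp 1) with hz | hz
  · rw [erQuantile_of_lt hz]
    have : 0 < 1 - z := by linarith [one_sub_one_div_exp_one_mem_Ioo.2]
    positivity
  · rwa [erQuantile_of_le hz]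

lemma erQuantile_eqOn_Iic (vb : ℝ) :
    EqOn (erQuantile vb) (fun z => vb / exp 1 * (1 - z)⁻¹) (Iic (1 - 1 / exp 1)) := by
  intro z hz
  rcases (mem_Iic.mp hz).lt_or_eq with hz | rfl
  · rw [erQuantile_of_lt hz, ← div_div, div_eq_mul_inv (vb / exp 1)]
  · rw [erQuantile_of_le le_rfl]; field_simp; ring

lemma erQuantile_eqOn_Ici (vb : ℝ) : EqOn (erQuantile vb) (fun _ => vb) (Ici (1 - 1 / exp 1)) :=
  fun _ hz => erQuantile_of_le hz

lemma intervalIntegrable_erQuantile_left (vb : ℝ) :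
    IntervalIntegrable (erQuantile vb) volume 0 (1 - 1 / exp 1) := by
  refine ContinuousOn.intervalIntegrable ?_
  rw [uIcc_of_le one_sub_one_div_exp_one_mem_Ioo.1.le]
  refine ContinuousOn.congr ?_ ((erQuantile_eqOn_Iic vb).mono Icc_subset_Iic_self)
  refine continuousOn_const.mul (ContinuousOn.inv₀ (by fun_prop) fun z hz => ?_)
  linarith [hz.2, one_sub_one_div_exp_one_mem_Ioo.2]

lemma integral_erQuantile_left (vb : ℝ) :
    ∫ z in (0:ℝ)..(1 - 1 / exp 1), erQuantile vb z = vb / exp 1 := by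
  rw [intervalIntegral.integral_congr ((erQuantile_eqOn_Iic vb).mono (by
      rw [uIcc_of_le one_sub_one_div_exp_one_mem_Ioo.1.le]; exact Icc_subset_Iic_self)),
    intervalIntegral.integral_const_mul,
    intervalIntegral.integral_comp_sub_left (fun x => x⁻¹) 1, sub_sub_cancel, sub_zero,
    integral_inv_of_pos (by positivity) one_pos]
  simp

lemma integral_erQuantile_right (vb : ℝ) :
    ∫ z in (1 - 1 / exp 1)..1, erQuantile vb z = vb / exp 1 := by
  rw [intervalIntegral.integral_congr ((erQuantile_eqOn_Ici vb).mono (by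
      rw [uIcc_of_le one_sub_one_div_exp_one_mem_Ioo.2.le]; exact Icc_subset_Ici_self)),
    intervalIntegral.integral_const, smul_eq_mul]
  ring

lemma intervalIntegrable_erQuantile_right (vb : ℝ) :
    IntervalIntegrable (erQuantile vb) volume (1 - 1 / exp 1) 1 := by
  refine intervalIntegrable_const.congr ((erQuantile_eqOn_Ici vb).mono ?_).symm
  rw [uIoc_of_le one_sub_one_div_exp_one_mem_Ioo.2.le]
  exact Ioc_subset_Ioi_self.trans Ioi_subset_Ici_self

lemma intervalIntegrable_erQuantile (vb : ℝ) : IntervalIntegrable (erQuantile vb) volume 0 1 :=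
  (intervalIntegrable_erQuantile_left vb).trans (intervalIntegrable_erQuantile_right vb)

lemma integral_erQuantile (vb : ℝ) : ∫ z in (0:ℝ)..1, erQuantile vb z = 2 * vb / exp 1 := by
  rw [← intervalIntegral.integral_add_adjacent_intervals (intervalIntegrable_erQuantile_left vb)
    (intervalIntegrable_erQuantile_right vb),
    integral_erQuantile_left, integral_erQuantile_right]
  ring

lemma exp_one_mul_one_sub_mul_le_of_le_erQuantile {vb z p : ℝ} (hp : 0 ≤ p)
    (h : p ≤ erQuantile vb z) : exp 1 * (1 - z) * p ≤ vb := by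
  rcases lt_or_ge z (1 - 1 / exp 1) with hz | hz
  · rw [erQuantile_of_lt hz] at h
    have : 0 < exp 1 * (1 - z) :=
      mul_pos (exp_pos 1) (by linarith [one_sub_one_div_exp_one_mem_Ioo.2])
    rwa [le_div_iff₀ this, mul_comm] at h
  · rw [erQuantile_of_le hz] at h
    have hle : exp 1 * (1 - z) ≤ 1 := by
      rw [← le_div_iff₀' (exp_pos 1)]; linarith
    calc exp 1 * (1 - z) * p ≤ 1 * p := by gcongr
      _ ≤ vb := by linarith

lemma integral_postedPricePayment_erQuantile_le {vb p : ℝ} (hvb : 0 ≤ vb) (hp : 0 ≤ p) :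
    ∫ z in Ioc 0 1, postedPricePayment (erQuantile vb z) p ≤ vb / exp 1 := by
  rcases hp.eq_or_lt with rfl | hp
  · simp only [postedPricePayment, ite_self, integral_zero]; positivity
  set a := 1 - vb / (exp 1 * p)
  have hS : MeasurableSet {z | p ≤ erQuantile vb z} :=
    measurableSet_le measurable_const (measurable_erQuantile vb)
  have hsub : {z | p ≤ erQuantile vb z} ∩ Ioc 0 1 ⊆ Icc a 1 := by
    rintro z ⟨hpz, -, hz1⟩
    have hbound := exp_one_mul_one_sub_mul_le_of_le_erQuantile hp.le hpz
    have : 1 - z ≤ vb / (exp 1 * p) := by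
      rw [le_div_iff₀ (by positivity)]; linarith
    exact ⟨by linarith, hz1⟩
  have ha : a ≤ 1 := sub_le_self 1 (by positivity)
  calc ∫ z in Ioc 0 1, postedPricePayment (erQuantile vb z) p
      = ∫ z in Ioc 0 1, {z | p ≤ erQuantile vb z}.indicator (fun _ => p) z := rfl
    _ = volume.real ({z | p ≤ erQuantile vb z} ∩ Ioc 0 1) * p := by
      rw [integral_indicator_const _ hS, measureReal_restrict_apply hS, smul_eq_mul]
    _ ≤ volume.real (Icc a 1) * p :=
      mul_le_mul_of_nonneg_right (measureReal_mono hsub measure_Icc_lt_top.ne) hp.le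
    _ = vb / exp 1 := by
      rw [Real.volume_real_Icc_of_le ha, sub_sub_cancel]
      field_simp

/-- under the equal-revenue distribution, any randomized posted
price `G` (a probability measure on `[0,∞)`) incurs expected regret at least
`v̄/e`: `∫_0^1 ∫ (φ_{v̄}(z) − p·𝟙{φ_{v̄}(z) ≥ p}) dG(p) dz ≥ v̄/e`. -/
theorem stmt_8 (vb : ℝ) (hvb : 0 < vb) (G : MeasureTheory.Measure ℝ)
    [MeasureTheory.IsProbabilityMeasure G] (hG : ∀ᵐ p ∂G, 0 ≤ p) :
    vb / Real.exp 1 ≤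
      ∫ z in (0:ℝ)..1,
        ∫ p, (erQuantile vb z - if p ≤ erQuantile vb z then p else 0) ∂G := by
  have hmean : ∫ z in Ioc 0 1, erQuantile vb z = 2 * vb / exp 1 := by
    rw [← intervalIntegral.integral_of_le zero_le_one, integral_erQuantile]
  have hregret := sub_le_integral_integral_sub_postedPricePayment hG (measurable_erQuantile vb)
    (intervalIntegrable_erQuantile vb).1 (erQuantile_nonneg hvb.le)
    (fun _ hp => integral_postedPricePayment_erQuantile_le hvb.le hp)
  rw [hmean] at hregret
  calc vb / exp 1 = 2 * vb / exp 1 - vb / exp 1 := by ring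
    _ ≤ _ := hregret
    _ = _ := (intervalIntegral.integral_of_le zero_le_one).symm
end

section
/- Let J be a nonempty finite set, v̄_j > 0 for j ∈ J, and B = Σ_{j∈J} v̄_j. Fix values v_j ∈ [0, v̄_j] and let b = Σ_{j∈J} v_j. (i) If b ≥ B/e, then for all r ∈ [B/e, B], b·(1 + log(r/B)) − (r − B/e) ≤ b·(1 + log(b/B)) − (b − B/e), the truthful utility equals b·log(b/B) + B/e ≥ 0, and the seller's regret b − (b − B/e) equals B/e. (ii) If b < B/e, then b·(1 + log(r/B)) − (r − B/e) ≤ 0 for all r ∈ [B/e, B], and the regret from non-participation is b < B/e. In particular, at every value profile the ex-post regret under buyer-optimal behavior is at most Σ_{j∈J} v̄_j / e. -/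
lemma xlogx_aux (x : ℝ) (hx : 0 < x) : -(1 / Real.exp 1) ≤ x * Real.log x := by
  have hx' : x = Real.exp (Real.log x) := (Real.exp_log hx).symm
  set t := Real.log x with ht
  have h := Real.add_one_le_exp (-1 - t)
  have h2 : Real.exp (-1 - t) = Real.exp (-1) / Real.exp t := by
    rw [Real.exp_sub]
  have h3 : Real.exp (-1) = 1 / Real.exp 1 := by
    rw [Real.exp_neg]; ring
  have h4 : -t * Real.exp t ≤ Real.exp (-1) := by
    rw [h2] at h
    have h5 : -t ≤ Real.exp (-1) / Real.exp t := by linarith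
    have := (le_div_iff₀ (Real.exp_pos t)).mp h5
    linarith
  have h3' : (1:ℝ) / Real.exp 1 = Real.exp (-1) := by rw [Real.exp_neg, one_div]
  rw [hx', h3']
  nlinarith [h4]

/-- Remark 7, randomized grand bundling: with `B = Σ_j v̄_j`,
`b = Σ_j v_j`, a report `r ∈ [B/e, B]` buys the bundle with probability
`1 + log(r/B)` at price `r − B/e`. (i) If `b ≥ B/e`, truthful reporting is
optimal, yields utility `b·log(b/B) + B/e ≥ 0`, and the seller's regret is
`B/e`. (ii) If `b < B/e`, every report yields nonpositive utility and the
regret from non-participation is `b < B/e`. In particular, the ex-post regret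
under buyer-optimal behavior is at most `Σ_j v̄_j / e`. -/
theorem stmt_15 {J : Type*} [Fintype J] [Nonempty J]
    (vbar : J → ℝ) (hvbar : ∀ j, 0 < vbar j)
    (v : J → ℝ) (hv : ∀ j, 0 ≤ v j ∧ v j ≤ vbar j)
    (B b : ℝ) (hB : B = ∑ j, vbar j) (hb : b = ∑ j, v j) :
    ((B / Real.exp 1 ≤ b →
      (∀ r ∈ Set.Icc (B / Real.exp 1) B,
        b * (1 + Real.log (r / B)) - (r - B / Real.exp 1) ≤
          b * (1 + Real.log (b / B)) - (b - B / Real.exp 1)) ∧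
      b * (1 + Real.log (b / B)) - (b - B / Real.exp 1)
          = b * Real.log (b / B) + B / Real.exp 1 ∧
      0 ≤ b * Real.log (b / B) + B / Real.exp 1 ∧
      b - (b - B / Real.exp 1) = B / Real.exp 1) ∧
    (b < B / Real.exp 1 →
      (∀ r ∈ Set.Icc (B / Real.exp 1) B,
        b * (1 + Real.log (r / B)) - (r - B / Real.exp 1) ≤ 0) ∧
      b < B / Real.exp 1)) ∧
    (if B / Real.exp 1 ≤ b then B / Real.exp 1 else b) ≤ (∑ j, vbar j) / Real.exp 1 := by
  have hBpos : 0 < B := by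
    rw [hB]; exact Finset.sum_pos (fun j _ => hvbar j) Finset.univ_nonempty
  have hepos : (0:ℝ) < Real.exp 1 := Real.exp_pos 1
  have hBe : 0 < B / Real.exp 1 := div_pos hBpos hepos
  have hb0 : 0 ≤ b := by
    rw [hb]; exact Finset.sum_nonneg (fun j _ => (hv j).1)
  have hbB : b ≤ B := by
    rw [hb, hB]; exact Finset.sum_le_sum (fun j _ => (hv j).2)
  refine ⟨⟨?_, ?_⟩, ?_⟩
  · intro hbe
    have hbpos : 0 < b := lt_of_lt_of_le hBe hbe
    refine ⟨?_, by ring, ?_, by ring⟩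
    · rintro r ⟨hr1, hr2⟩
      have hrpos : 0 < r := lt_of_lt_of_le hBe hr1
      have key : Real.log (r / b) ≤ r / b - 1 :=
        Real.log_le_sub_one_of_pos (div_pos hrpos hbpos)
      rw [Real.log_div (ne_of_gt hrpos) (ne_of_gt hbpos)] at key
      rw [Real.log_div (ne_of_gt hrpos) (ne_of_gt hBpos),
        Real.log_div (ne_of_gt hbpos) (ne_of_gt hBpos)]
      have : b * (Real.log r - Real.log b) ≤ r - b := by
        have := mul_le_mul_of_nonneg_left key (le_of_lt hbpos)
        calc b * (Real.log r - Real.log b) ≤ b * (r / b - 1) := this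
          _ = r - b := by field_simp
      nlinarith
    · -- 0 ≤ b * log (b/B) + B/e
      have hx : 0 < b / B := div_pos hbpos hBpos
      have h := xlogx_aux (b / B) hx
      have h2 := mul_le_mul_of_nonneg_left h (le_of_lt hBpos)
      have hbB' : B * (b / B * Real.log (b / B)) = b * Real.log (b / B) := by
        field_simp
      have e1 : B * -(1 / Real.exp 1) = -(B / Real.exp 1) := by ring
      linarith
  · intro hbe
    refine ⟨?_, hbe⟩
    rintro r ⟨hr1, hr2⟩
    have hrpos : 0 < r := lt_of_lt_of_le hBe hr1
    -- 1 + log(r/B) ≥ 0 and ≤ e r / B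
    have hlogmono : Real.log (B / Real.exp 1 / B) ≤ Real.log (r / B) := by
      apply Real.log_le_log (div_pos hBe hBpos) (div_le_div_of_nonneg_right hr1 hBpos.le)
    have hval : B / Real.exp 1 / B = (Real.exp 1)⁻¹ := by field_simp
    rw [hval, Real.log_inv, Real.log_exp] at hlogmono
    have hnn : 0 ≤ 1 + Real.log (r / B) := by linarith
    -- log(r/(B/e)) ≤ r/(B/e) - 1
    have key : Real.log (r / (B / Real.exp 1)) ≤ r / (B / Real.exp 1) - 1 :=
      Real.log_le_sub_one_of_pos (div_pos hrpos hBe)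
    have hlog : Real.log (r / (B / Real.exp 1)) = Real.log (r / B) + 1 := by
      rw [Real.log_div (ne_of_gt hrpos) (ne_of_gt hBe),
        Real.log_div (ne_of_gt hrpos) (ne_of_gt hBpos),
        Real.log_div (ne_of_gt hBpos) (ne_of_gt hepos), Real.log_exp]
      ring
    rw [hlog] at key
    have hdiv : r / (B / Real.exp 1) = r * Real.exp 1 / B := by
      field_simp
    rw [hdiv] at key
    -- so (B/e)(1 + log(r/B)) ≤ r - B/e
    have h1 : B / Real.exp 1 * (1 + Real.log (r / B)) ≤ r - B / Real.exp 1 := by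
      have := mul_le_mul_of_nonneg_left key (le_of_lt hBe)
      calc B / Real.exp 1 * (1 + Real.log (r / B))
          ≤ B / Real.exp 1 * (r * Real.exp 1 / B - 1 + 1 - 1) := by
            nlinarith
        _ = r - B / Real.exp 1 := by field_simp; ring
    have h2 : b * (1 + Real.log (r / B)) ≤ B / Real.exp 1 * (1 + Real.log (r / B)) :=
      mul_le_mul_of_nonneg_right (le_of_lt hbe) hnn
    linarith
  · rw [← hB]
    split_ifs with h
    · exact le_refl _
    · linarith
end

section
/- Let I and J be nonempty finite sets, v̄_i^j > 0 for i ∈ I, j ∈ J, and let (v_i^j) be a value profile with v_i^j ∈ [0, v̄_i^j] such that for every j ∈ J there is a unique bidder i(j) with v_{i(j)}^j > v_k^j for all k ≠ i(j). For each j, let p^j = max_{k ≠ i(j)} v_k^j (p^j = 0 if I = {i(j)}) and define the winner's payment t^j by: t^j = v_{i(j)}^j − v̄_{i(j)}^j/e if p^j < v̄_{i(j)}^j/e ≤ v_{i(j)}^j; t^j = v_{i(j)}^j + p^j·log(p^j/v̄_{i(j)}^j) if v̄_{i(j)}^j/e ≤ p^j < v_{i(j)}^j; t^j = 0 if v_{i(j)}^j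 < v̄_{i(j)}^j/e. Then Σ_{j∈J} (max_{i∈I} v_i^j − t^j) ≤ Σ_{j∈J} max_{i∈I} v̄_i^j / e. -/
lemma aux_xlog (B x : ℝ) (hB : 0 < B) (hx : 0 < x) :
    x * Real.log (B / x) ≤ B / Real.exp 1 := by
  have he := Real.exp_pos 1
  have h2 : Real.log (B / x / Real.exp 1) ≤ B / x / Real.exp 1 - 1 :=
    Real.log_le_sub_one_of_pos (by positivity)
  have h3 : Real.log (B / x) = Real.log (B / x / Real.exp 1) + 1 := by
    rw [Real.log_div (by positivity) he.ne', Real.log_exp]; ring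
  have h1 : Real.log (B / x) ≤ B / x / Real.exp 1 := by linarith
  calc x * Real.log (B / x) ≤ x * (B / x / Real.exp 1) :=
        mul_le_mul_of_nonneg_left h1 hx.le
    _ = B / Real.exp 1 := by field_simp

/-- Proposition 1, truth-telling, no-ties version: in the
separate second-price auction with bidder-specific random reserves, the
ex-post regret `Σ_j (max_i v_i^j − t^j)` is at most `Σ_j max_i v̄_i^j / e`
at every value profile in which each good has a unique highest bidder. -/
theorem stmt_16 {ι J : Type*} [Fintype ι] [Nonempty ι] [DecidableEq ι]
    [Fintype J] [Nonempty J]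
    (vbar : ι → J → ℝ) (hvbar : ∀ i j, 0 < vbar i j)
    (v : ι → J → ℝ) (hv : ∀ i j, 0 ≤ v i j ∧ v i j ≤ vbar i j)
    (w : J → ι) (hw : ∀ j, ∀ k, k ≠ w j → v k j < v (w j) j)
    (p : J → ℝ)
    (hp : ∀ j, p j = (Finset.univ.erase (w j)).fold max 0 (fun k => v k j))
    (t : J → ℝ)
    (ht : ∀ j, t j = if v (w j) j < vbar (w j) j / Real.exp 1 then 0
      else if p j < vbar (w j) j / Real.exp 1 then v (w j) j - vbar (w j) j / Real.exp 1
      else v (w j) j + p j * Real.log (p j / vbar (w j) j)) :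
    ∑ j, (Finset.univ.sup' Finset.univ_nonempty (fun i => v i j) - t j) ≤
      ∑ j, Finset.univ.sup' Finset.univ_nonempty (fun i => vbar i j) / Real.exp 1 := by
  apply Finset.sum_le_sum
  intro j _
  have he := Real.exp_pos 1
  have hsupv : Finset.univ.sup' Finset.univ_nonempty (fun i => v i j) = v (w j) j := by
    apply le_antisymm
    · apply Finset.sup'_le
      intro k _
      by_cases hk : k = w j
      · subst hk; exact le_rfl
      · exact (hw j k hk).le
    · exact Finset.le_sup' (fun i => v i j) (Finset.mem_univ (w j))
  have hS : vbar (w j) j ≤ Finset.univ.sup' Finset.univ_nonempty (fun i => vbar i j) :=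
    Finset.le_sup' (fun i => vbar i j) (Finset.mem_univ (w j))
  have hSe : vbar (w j) j / Real.exp 1 ≤
      Finset.univ.sup' Finset.univ_nonempty (fun i => vbar i j) / Real.exp 1 := by
    gcongr
  rw [hsupv, ht j]
  split_ifs with h1 h2
  · linarith [(hv (w j) j).1]
  · linarith
  · push_neg at h1 h2
    have hP : 0 < p j := lt_of_lt_of_le (div_pos (hvbar (w j) j) he) h2
    have hlog : Real.log (p j / vbar (w j) j) =
        - Real.log (vbar (w j) j / p j) := by
      rw [← Real.log_inv, inv_div]
    have := aux_xlog (vbar (w j) j) (p j) (hvbar (w j) j) hP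
    rw [hlog]
    nlinarith
end

section
/- Fix a nonempty finite set I with bounds v̄_i > 0 and a strict linear order ≺ on I such that v̄_i < v̄_k implies i ≺ k. Consider the single-good direct mechanism: given reports v with v_i ∈ [0, v̄_i], let W(v) = {s ∈ I : v_s ≥ v_k for all k ∈ I, and v_s ≥ v̄_s/e}. If W(v) = ∅, all allocations and payments are 0. Otherwise the ≺-least element i of W(v) wins with probability q_i(v) = 1 + log(v_i/v̄_i) and pays: t_i(v) = v_i − v̄_i/e if p < v̄_i/e, and t_i(v) = v_i + p·log(p/v̄_i) if p ≥ v̄_i/e, where p = max_{k≠i} v_k (p = 0 if I = {i}; in case of a tie p = v_i, giving t_i(v) = v_i + v_i·log(v_i/v̄_i)); all other bidders receive and pay 0. Then this mechanism is dominant-strategy incentive compatible and ex-post individually rational: for every i ∈ I, every profile v, and every report r ∈ [0, v̄_i], v_i·q_i(v) − t_i(v) ≥ v_i·q_i(r, v_{−i}) − t_i(r, v_{−i}) and v_i·q_i(v) − t_i(v) ≥ 0. -/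
/-- The set of highest bidders whose bids are at least their own reserve floor
`v̄_s/e`. -/
noncomputable def winSet {ι : Type*} [Fintype ι] (vbar v : ι → ℝ) : Finset ι :=
  Finset.univ.filter fun s => (∀ k, v k ≤ v s) ∧ vbar s / Real.exp 1 ≤ v s

/-- Allocation rule of the per-good mechanism of `(M*, q*, t*)`: if the win set
is nonempty, its `≺`-least element (lowest upper bound first) wins with
probability `1 + log(v_i/v̄_i)`; everyone else gets `0`. -/
noncomputable def alloc {ι : Type*} [Fintype ι] [LinearOrder ι]
    (vbar v : ι → ℝ) (i : ι) : ℝ :=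
  if h : (winSet vbar v).Nonempty then
    if i = (winSet vbar v).min' h then 1 + Real.log (v i / vbar i) else 0
  else 0

/-- Payment rule of the per-good mechanism of `(M*, q*, t*)`: the winner `i`
pays `v_i − v̄_i/e` if `p < v̄_i/e` and `v_i + p·log(p/v̄_i)` if `p ≥ v̄_i/e`,
where `p = max_{k≠i} v_k` (`p = 0` if `i` is the only bidder); losers pay `0`. -/
noncomputable def pay {ι : Type*} [Fintype ι] [LinearOrder ι]
    (vbar v : ι → ℝ) (i : ι) : ℝ :=
  if h : (winSet vbar v).Nonempty then
    if i = (winSet vbar v).min' h then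
      let p : ℝ := (Finset.univ.erase i).fold max 0 v
      if p < vbar i / Real.exp 1 then v i - vbar i / Real.exp 1
      else v i + p * Real.log (p / vbar i)
    else 0
  else 0


private lemma loglb {b r : ℝ} (hb : 0 < b) (hr : 0 < r) :
    b * (Real.log r - Real.log b) ≤ r - b := by
  have h := Real.log_le_sub_one_of_pos (show 0 < r / b by positivity)
  rw [Real.log_div hr.ne' hb.ne'] at h
  have h2 := mul_le_mul_of_nonneg_left h hb.le
  have h3 : b * (r / b - 1) = r - b := by field_simp
  linarith

private lemma logbound {v c r : ℝ} (hc : 0 < c) (hv0 : 0 ≤ v) (hvc : v ≤ c) (hcr : c ≤ r) :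
    v * (Real.log r - Real.log c) ≤ r - c := by
  have hr : 0 < r := lt_of_lt_of_le hc hcr
  have h := Real.log_le_sub_one_of_pos (show 0 < r / c by positivity)
  rw [Real.log_div hr.ne' hc.ne'] at h
  have h2 : v * (Real.log r - Real.log c) ≤ v * (r / c - 1) := mul_le_mul_of_nonneg_left h hv0
  have h3 : v * (r / c - 1) ≤ c * (r / c - 1) := by
    apply mul_le_mul_of_nonneg_right hvc
    rw [sub_nonneg]
    exact (one_le_div hc).mpr hcr
  have h4 : c * (r / c - 1) = r - c := by field_simp
  linarith

private lemma xlogx_ge {c x : ℝ} (hc : 0 < c) (hx : 0 < x) :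
    -(c / Real.exp 1) ≤ x * (Real.log x - Real.log c) := by
  have h := Real.log_le_sub_one_of_pos (show 0 < c / (Real.exp 1 * x) by positivity)
  rw [Real.log_div hc.ne' (by positivity), Real.log_mul (Real.exp_pos 1).ne' hx.ne',
    Real.log_exp] at h
  have h2 := mul_le_mul_of_nonneg_left h hx.le
  have h3 : x * (c / (Real.exp 1 * x) - 1) = c / Real.exp 1 - x := by
    field_simp
  nlinarith

private lemma xlogx_mono {c p x : ℝ} (hc : 0 < c) (hp : c / Real.exp 1 ≤ p) (hpx : p ≤ x) :
    p * (Real.log p - Real.log c) ≤ x * (Real.log x - Real.log c) := by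
  have hp0 : 0 < p := lt_of_lt_of_le (by positivity) hp
  have hx0 : 0 < x := lt_of_lt_of_le hp0 hpx
  have h1 := loglb hx0 hp0
  have h2 : Real.log c - 1 ≤ Real.log p := by
    have := Real.log_le_log (by positivity : (0:ℝ) < c / Real.exp 1) hp
    rwa [Real.log_div hc.ne' (Real.exp_pos 1).ne', Real.log_exp] at this
  nlinarith [mul_nonneg (sub_nonneg.mpr hpx)
    (by linarith : (0:ℝ) ≤ Real.log p - Real.log c + 1)]

private lemma logc {c : ℝ} (hc : 0 < c) :
    Real.log (c / Real.exp 1) = Real.log c - 1 := by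
  rw [Real.log_div hc.ne' (Real.exp_pos 1).ne', Real.log_exp]

private lemma mem_winSet {ι : Type*} [Fintype ι] {vbar v : ι → ℝ} {i : ι} :
    i ∈ winSet vbar v ↔ (∀ k, v k ≤ v i) ∧ vbar i / Real.exp 1 ≤ v i := by
  simp [winSet]

private lemma winSet_singleton {ι : Type*} [Fintype ι] {vbar v : ι → ℝ} {i : ι}
    (h1 : vbar i / Real.exp 1 ≤ v i) (h2 : ∀ k, k ≠ i → v k < v i) :
    winSet vbar v = {i} := by
  ext s
  rw [mem_winSet, Finset.mem_singleton]
  constructor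
  · rintro ⟨hmax, -⟩
    by_contra hs
    exact absurd (hmax i) (not_le.mpr (h2 s hs))
  · intro hs
    subst hs
    refine ⟨fun k => ?_, h1⟩
    rcases eq_or_ne k s with rfl | hk
    · exact le_rfl
    · exact (h2 k hk).le

private lemma win_cases {ι : Type*} [Fintype ι] [LinearOrder ι] (vbar w : ι → ℝ) (i : ι) :
    (alloc vbar w i = 0 ∧ pay vbar w i = 0) ∨
    (i ∈ winSet vbar w ∧
      alloc vbar w i = 1 + Real.log (w i / vbar i) ∧
      pay vbar w i =
        (if (Finset.univ.erase i).fold max 0 w < vbar i / Real.exp 1 then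
          w i - vbar i / Real.exp 1
        else w i + ((Finset.univ.erase i).fold max 0 w) *
          Real.log (((Finset.univ.erase i).fold max 0 w) / vbar i))) := by
  unfold alloc pay
  by_cases h : (winSet vbar w).Nonempty
  · by_cases hi : i = (winSet vbar w).min' h
    · right
      refine ⟨hi ▸ Finset.min'_mem _ h, ?_, ?_⟩ <;> simp [h, hi]
    · left; simp [h, hi]
  · left; simp [h]

private lemma alloc_pay_strict {ι : Type*} [Fintype ι] [LinearOrder ι]
    {vbar w : ι → ℝ} {i : ι}
    (h1 : vbar i / Real.exp 1 ≤ w i) (h2 : ∀ k, k ≠ i → w k < w i) :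
    alloc vbar w i = 1 + Real.log (w i / vbar i) ∧
    pay vbar w i =
      (if (Finset.univ.erase i).fold max 0 w < vbar i / Real.exp 1 then
        w i - vbar i / Real.exp 1
      else w i + ((Finset.univ.erase i).fold max 0 w) *
        Real.log (((Finset.univ.erase i).fold max 0 w) / vbar i)) := by
  have hset := winSet_singleton h1 h2
  constructor <;> simp [alloc, pay, hset]

/-- the per-good second-price auction with bidder-specific random
reserves and the paper's tie-breaking rule (a strict linear order `<` on
bidders such that `v̄_i < v̄_k` implies `i < k`) is dominant-strategy incentive
compatible and ex-post individually rational. -/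
theorem stmt_17 {ι : Type*} [Fintype ι] [Nonempty ι] [LinearOrder ι]
    (vbar : ι → ℝ) (hvbar : ∀ i, 0 < vbar i)
    (horder : ∀ i k, vbar i < vbar k → i < k) :
    ∀ (i : ι) (v : ι → ℝ), (∀ k, 0 ≤ v k ∧ v k ≤ vbar k) →
      ∀ r, 0 ≤ r → r ≤ vbar i →
        (v i * alloc vbar (Function.update v i r) i
            - pay vbar (Function.update v i r) i ≤
          v i * alloc vbar v i - pay vbar v i) ∧
        0 ≤ v i * alloc vbar v i - pay vbar v i := by
  intro i v hv r hr0 hr1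
  have hvb : 0 < vbar i := hvbar i
  have hc : 0 < vbar i / Real.exp 1 := by positivity
  set p : ℝ := (Finset.univ.erase i).fold max 0 v with hpdef
  have hp0 : 0 ≤ p := (Finset.le_fold_max _).mpr (Or.inl le_rfl)
  have hple : ∀ k, k ≠ i → v k ≤ p := fun k hk =>
    (Finset.le_fold_max _).mpr (Or.inr ⟨k, Finset.mem_erase.mpr ⟨hk, Finset.mem_univ k⟩, le_rfl⟩)
  have hfold : (Finset.univ.erase i).fold max 0 (Function.update v i r) = p :=
    Finset.fold_congr fun k hk => Function.update_of_ne (Finset.ne_of_mem_erase hk) _ _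
  have hb0 : 0 ≤ v i := (hv i).1
  have hb1 : v i ≤ vbar i := (hv i).2
  -- ex-post individual rationality
  have hT : 0 ≤ v i * alloc vbar v i - pay vbar v i := by
    rcases win_cases vbar v i with ⟨ha, hpay⟩ | ⟨hmem, ha, hpay⟩
    · rw [ha, hpay]; simp
    · rw [mem_winSet] at hmem
      have hcb : vbar i / Real.exp 1 ≤ v i := hmem.2
      have hb : 0 < v i := lt_of_lt_of_le hc hcb
      have hpb : p ≤ v i := (Finset.fold_max_le _).mpr ⟨hb0, fun k _ => hmem.1 k⟩
      rw [← hpdef] at hpay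
      rw [ha, hpay, Real.log_div hb.ne' hvb.ne']
      split_ifs with hcase
      · have := xlogx_ge hvb hb
        nlinarith
      · push_neg at hcase
        have hp0' : 0 < p := lt_of_lt_of_le hc hcase
        rw [Real.log_div hp0'.ne' hvb.ne']
        have := xlogx_mono hvb hcase hpb
        nlinarith
  refine ⟨?_, hT⟩
  -- dominant-strategy incentive compatibility
  rcases win_cases vbar (Function.update v i r) i with ⟨ha, hpay⟩ | ⟨hmem, ha, hpay⟩
  · rw [ha, hpay]; simpa using hT
  · rw [mem_winSet] at hmem
    have hui : Function.update v i r i = r := Function.update_self i r v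
    obtain ⟨hmax', hcr⟩ := hmem
    rw [hui] at hcr
    have hpr : p ≤ r := (Finset.fold_max_le _).mpr ⟨hr0, fun k hk => by
      have h := hmax' k
      rwa [Function.update_of_ne (Finset.ne_of_mem_erase hk) r v, hui] at h⟩
    have hr' : 0 < r := lt_of_lt_of_le hc hcr
    rw [ha, hpay, hfold, hui]
    by_cases hbig : p < v i ∧ vbar i / Real.exp 1 ≤ v i
    · obtain ⟨hpb, hcb⟩ := hbig
      have hb : 0 < v i := lt_of_lt_of_le hc hcb
      obtain ⟨ha2, hp2⟩ := alloc_pay_strict (vbar := vbar) (w := v) (i := i) hcb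
        (fun k hk => lt_of_le_of_lt (hple k hk) hpb)
      rw [← hpdef] at hp2
      rw [ha2, hp2, Real.log_div hr'.ne' hvb.ne', Real.log_div hb.ne' hvb.ne']
      have hkey := loglb hb hr'
      split_ifs with hcase
      · nlinarith
      · nlinarith
    · have hD0 : v i * (1 + Real.log (r / vbar i)) -
          (if p < vbar i / Real.exp 1 then r - vbar i / Real.exp 1
           else r + p * Real.log (p / vbar i)) ≤ 0 := by
        rw [Real.log_div hr'.ne' hvb.ne']
        split_ifs with hcase
        · have hbc : v i < vbar i / Real.exp 1 := by
            by_contra h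
            push_neg at h
            exact hbig ⟨lt_of_lt_of_le hcase h, h⟩
          have hkey := logbound hc hb0 hbc.le hcr
          rw [logc hvb] at hkey
          linarith
        · push_neg at hcase
          have hp0' : 0 < p := lt_of_lt_of_le hc hcase
          have hbp : v i ≤ p := by
            by_contra h
            push_neg at h
            exact hbig ⟨h, le_trans hcase h.le⟩
          have hkey := logbound hp0' hb0 hbp hpr
          have hlp : Real.log (vbar i) - 1 ≤ Real.log p := by
            have h2 := Real.log_le_log hc hcase
            rwa [logc hvb] at h2
          rw [Real.log_div hp0'.ne' hvb.ne']
          nlinarith [mul_nonneg (sub_nonneg.mpr hbp)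
            (by linarith : (0:ℝ) ≤ Real.log p - Real.log (vbar i) + 1)]
      linarith
end
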